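/- arXiv:0806.2080 — 4 statements merged into one kernel-verified Lean document; each statement's English description precedes it below -/
import Mathlib

section
/- Let D > 0, let v : (0, D) → ℝ be a nondecreasing function, and let b be a positive C¹ function on (0, D). Then v is differentiable almost everywhere, and for 0 < x < y < D one has b(y)v(y) − b(x)v(x) ≥ ∫_x^y (b(r) v'(r) + b'(r) v(r)) dr. -/
/-!
Extend `v` monotonically from `[x, y]` to `ℝ` and let `μ` be the Stieltjes measure of the
extension. By the Lebesgue decomposition, `μ ≥ v' dr`, so `∫ b v' ≤ ∫_(x,y] b dμ` because `b ≥ 0`.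
Integrating by parts (Fubini on `{t ≤ s}`) gives
`∫_(x,y] b dμ = b(y) v(y⁺) - b(x) v(x⁺) - ∫ b' v`, and `v(y⁺) = v(y)`, `v(x⁺) ≥ v(x)`.
-/

open MeasureTheory Set Function

section RadonNikodym

variable {α : Type*} [MeasurableSpace α] (μ ν : Measure α) [SigmaFinite μ] {s : Set α}
  {f : α → ℝ}

theorem integrableOn_toReal_rnDeriv_mul (hs : MeasurableSet s) (hf : IntegrableOn f s μ) :
    IntegrableOn (fun x => (μ.rnDeriv ν x).toReal * f x) s ν := by
  have hwd : IntegrableOn f s (ν.withDensity (μ.rnDeriv ν)) :=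
    hf.mono_measure (Measure.withDensity_rnDeriv_le μ ν)
  rwa [IntegrableOn, restrict_withDensity hs, integrable_withDensity_iff_integrable_smul'
    (Measure.measurable_rnDeriv μ ν) (ae_restrict_of_ae (Measure.rnDeriv_lt_top μ ν))] at hwd

theorem setIntegral_toReal_rnDeriv_mul_le (hs : MeasurableSet s) (hf0 : ∀ x ∈ s, 0 ≤ f x)
    (hf : IntegrableOn f s μ) :
    ∫ x in s, (μ.rnDeriv ν x).toReal * f x ∂ν ≤ ∫ x in s, f x ∂μ := by
  have hwd := setIntegral_withDensity_eq_setIntegral_toReal_smul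
    (Measure.measurable_rnDeriv μ ν) (ae_restrict_of_ae (Measure.rnDeriv_lt_top μ ν)) f hs
  simp only [smul_eq_mul] at hwd
  rw [← hwd]
  exact integral_mono_measure (Measure.restrict_mono subset_rfl
    (Measure.withDensity_rnDeriv_le μ ν)) (ae_restrict_of_forall_mem hs hf0) hf

end RadonNikodym

theorem Monotone.integrableOn_mul_Ioc {f g : ℝ → ℝ} {μ : Measure ℝ} (hf : Monotone f) {x y : ℝ}
    (hg : IntegrableOn g (Ioc x y) μ) : IntegrableOn (fun s => g s * f s) (Ioc x y) μ := by
  refine (hg.bdd_mul hf.measurable.aestronglyMeasurable (c := max |f x| |f y|) ?_).congr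
    (Filter.Eventually.of_forall fun s => mul_comm _ _)
  filter_upwards [ae_restrict_mem measurableSet_Ioc] with s hs
  exact abs_le_max_abs_abs (hf hs.1.le) (hf hs.2)

namespace StieltjesFunction

theorem measureReal_Ioc (F : StieltjesFunction ℝ) {x y : ℝ} (hxy : x ≤ y) :
    F.measure.real (Ioc x y) = F y - F x := by
  rw [measureReal_def, F.measure_Ioc, ENNReal.toReal_ofReal (sub_nonneg.2 (F.mono hxy))]

theorem integral_Ioc_eq_sub_integral_mul (F : StieltjesFunction ℝ) {x y : ℝ} (hxy : x ≤ y)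
    {c c' : ℝ → ℝ} (hc' : IntegrableOn c' (Ioc x y))
    (hc : ∀ t ∈ Icc x y, c t = c y - ∫ s in t..y, c' s) :
    ∫ t in Ioc x y, c t ∂F.measure = c y * F y - c x * F x - ∫ s in Ioc x y, c' s * F s := by
  set μ := F.measure.restrict (Ioc x y)
  set ℓ := volume.restrict (Ioc x y)
  have : IsFiniteMeasure μ := isFiniteMeasure_restrict.2 (by simp [F.measure_Ioc])
  -- With `t ≤ s` (not `t < s`) the `t`-sections are `Ioc x s`, of `F`-measure exactly `F s - F x`.
  set K : ℝ × ℝ → ℝ := {p | p.1 ≤ p.2}.indicator (fun p => c' p.2)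
  have hK : Integrable K (μ.prod ℓ) := by
    refine Integrable.mono' (hc'.comp_snd μ).norm
      ((hc'.aestronglyMeasurable.comp_snd).indicator
        (measurableSet_le measurable_fst measurable_snd)) (Filter.Eventually.of_forall fun p => ?_)
    exact norm_indicator_le_norm_self _ _
  have hinner_s : ∀ t ∈ Ioc x y, ∫ s, K (t, s) ∂ℓ = c y - c t := by
    intro t ht
    have hKt : (fun s => K (t, s)) = (Ici t).indicator c' := by
      ext s; simp [K, indicator]
    have hset : Ioc x y ∩ Ici t = Icc t y := by
      ext s; simp only [mem_inter_iff, mem_Ioc, mem_Ici, mem_Icc]; grind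
    rw [hKt, setIntegral_indicator measurableSet_Ici, hset, integral_Icc_eq_integral_Ioc,
      ← intervalIntegral.integral_of_le ht.2, hc t (Ioc_subset_Icc_self ht)]
    ring
  have hinner_t : ∀ s ∈ Ioc x y, ∫ t, K (t, s) ∂μ = c' s * (F s - F x) := by
    intro s hs
    have hKs : (fun t => K (t, s)) = (Iic s).indicator (fun _ => c' s) := by
      ext t; simp [K, indicator]
    rw [hKs, setIntegral_indicator measurableSet_Iic, Ioc_inter_Iic, min_eq_right hs.2,
      setIntegral_const, smul_eq_mul, F.measureReal_Ioc hs.1.le, mul_comm]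
  have hc'_total : ∫ s in Ioc x y, c' s = c y - c x := by
    rw [← intervalIntegral.integral_of_le hxy, hc x ⟨le_rfl, hxy⟩]
    ring
  calc ∫ t, c t ∂μ = ∫ t, (c y - ∫ s, K (t, s) ∂ℓ) ∂μ :=
        setIntegral_congr_fun measurableSet_Ioc fun t ht => by rw [hinner_s t ht]; ring
    _ = c y * (F y - F x) - ∫ s, ∫ t, K (t, s) ∂μ ∂ℓ := by
        rw [integral_sub (integrable_const _) hK.integral_prod_left, integral_const,
          measureReal_restrict_apply_univ, F.measureReal_Ioc hxy, smul_eq_mul, mul_comm, integral_integral_swap (f := fun t s => K (t, s)) hK]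
    _ = c y * (F y - F x) - ∫ s in Ioc x y, (c' s * F s - F x * c' s) :=
        congrArg _ (setIntegral_congr_fun measurableSet_Ioc fun s hs => by
          rw [hinner_t s hs]; ring)
    _ = c y * F y - c x * F x - ∫ s in Ioc x y, c' s * F s := by
        rw [integral_sub (F.mono.integrableOn_mul_Ioc hc') (hc'.const_mul _), integral_const_mul,
          hc'_total]
        ring

end StieltjesFunction

theorem Monotone.integral_mul_deriv_add_deriv_mul_le {g b b' : ℝ → ℝ} (hg : Monotone g)
    {x y : ℝ} (hxy : x ≤ y) (hb : ∀ t ∈ Icc x y, HasDerivAt b (b' t) t)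
    (hb' : IntervalIntegrable b' volume x y) (hb0 : ∀ t ∈ Icc x y, 0 ≤ b t) :
    ∫ r in x..y, (b r * deriv g r + b' r * g r) ≤ b y * rightLim g y - b x * rightLim g x := by
  set F := hg.stieltjesFunction
  have hF : ∀ t, F t = rightLim g t := hg.stieltjesFunction_eq
  have hb'Ioc : IntegrableOn b' (Ioc x y) := hb'.1
  have hbF : IntegrableOn b (Ioc x y) F.measure :=
    (ContinuousOn.integrableOn_Icc fun t ht => (hb t ht).continuousAt.continuousWithinAt).mono_set
      Ioc_subset_Icc_self
  have hftc : ∀ t ∈ Icc x y, b t = b y - ∫ s in t..y, b' s := by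
    intro t ht
    have hsub : uIcc t y ⊆ Icc x y := by
      rw [uIcc_of_le ht.2]; exact Icc_subset_Icc_left ht.1
    rw [intervalIntegral.integral_eq_sub_of_hasDerivAt (fun s hs => hb s (hsub hs))
      (hb'.mono_set (uIcc_of_le hxy ▸ hsub))]
    ring
  have hae : ∀ᵐ r ∂volume.restrict (Ioc x y), b r * deriv g r + b' r * g r
      = (F.measure.rnDeriv volume r).toReal * b r + b' r * F r := by
    filter_upwards [ae_restrict_of_ae hg.ae_hasDerivAt,
      ae_restrict_of_ae (hg.countable_not_continuousAt.ae_notMem volume)] with r hder hcont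
    rw [hder.deriv, hF, (not_not.1 hcont).continuousWithinAt.rightLim_eq]
    ring
  calc ∫ r in x..y, (b r * deriv g r + b' r * g r)
      = (∫ r in Ioc x y, (F.measure.rnDeriv volume r).toReal * b r)
          + ∫ r in Ioc x y, b' r * F r := by
        rw [intervalIntegral.integral_of_le hxy, integral_congr_ae hae,
          integral_add (integrableOn_toReal_rnDeriv_mul _ _ measurableSet_Ioc hbF)
            (F.mono.integrableOn_mul_Ioc hb'Ioc)]
    _ ≤ (∫ r in Ioc x y, b r ∂F.measure) + ∫ r in Ioc x y, b' r * F r := by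
        gcongr
        exact setIntegral_toReal_rnDeriv_mul_le _ _ measurableSet_Ioc
          (fun t ht => hb0 t (Ioc_subset_Icc_self ht)) hbF
    _ = b y * rightLim g y - b x * rightLim g x := by
        rw [F.integral_Ioc_eq_sub_integral_mul hxy hb'Ioc hftc, hF, hF]
        ring

theorem MonotoneOn.integral_mul_deriv_add_deriv_mul_le {v b b' : ℝ → ℝ} {x y : ℝ} (hxy : x ≤ y)
    (hv : MonotoneOn v (Icc x y)) (hb : ∀ t ∈ Icc x y, HasDerivAt b (b' t) t)
    (hb' : IntervalIntegrable b' volume x y) (hb0 : ∀ t ∈ Icc x y, 0 ≤ b t) :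
    ∫ r in x..y, (b r * deriv v r + b' r * v r) ≤ b y * v y - b x * v x := by
  set g := IccExtend hxy ((Icc x y).domRestrict v)
  have hg : Monotone g := (monotoneOn_iff_monotone.1 hv).IccExtend hxy
  have hgv : ∀ t ∈ Icc x y, g t = v t := fun t ht => IccExtend_of_mem hxy _ ht
  have hgy : rightLim g y = v y := by
    refine rightLim_eq_of_tendsto (tendsto_const_nhds.congr' ?_)
    filter_upwards [self_mem_nhdsWithin] with t ht
    exact (IccExtend_of_right_le hxy ((Icc x y).domRestrict v) ht.le).symm
  have hgx : v x ≤ rightLim g x := hgv x ⟨le_rfl, hxy⟩ ▸ hg.le_rightLim le_rfl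
  have hcongr : ∫ r in x..y, (b r * deriv v r + b' r * v r)
      = ∫ r in x..y, (b r * deriv g r + b' r * g r) := by
    simp only [intervalIntegral.integral_of_le hxy, integral_Ioc_eq_integral_Ioo]
    refine setIntegral_congr_fun measurableSet_Ioo fun r hr => ?_
    have hvg : v =ᶠ[nhds r] g := by
      filter_upwards [Ioo_mem_nhds hr.1 hr.2] with t ht
      exact (hgv t (Ioo_subset_Icc_self ht)).symm
    rw [hvg.deriv_eq, hvg.eq_of_nhds]
  calc ∫ r in x..y, (b r * deriv v r + b' r * v r)
      ≤ b y * rightLim g y - b x * rightLim g x := by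
        rw [hcongr]; exact hg.integral_mul_deriv_add_deriv_mul_le hxy hb hb' hb0
    _ ≤ b y * v y - b x * v x := by
        rw [hgy]
        exact sub_le_sub_left (mul_le_mul_of_nonneg_left hgx (hb0 x ⟨le_rfl, hxy⟩)) _

theorem stmt1_general (D : ℝ) (v : ℝ → ℝ) (hv : MonotoneOn v (Ioo 0 D))
    (b b' : ℝ → ℝ) (hbpos : ∀ r ∈ Ioo 0 D, 0 < b r)
    (hb : ∀ r ∈ Ioo 0 D, HasDerivAt b (b' r) r)
    (hb'cont : ContinuousOn b' (Ioo 0 D)) :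
    (∀ᵐ r ∂(volume.restrict (Ioo 0 D)), DifferentiableAt ℝ v r) ∧
    ∀ x y : ℝ, 0 < x → x < y → y < D →
      b y * v y - b x * v x ≥ ∫ r in x..y, (b r * deriv v r + b' r * v r) := by
  refine ⟨?_, fun x y hx hxy hyD => ?_⟩
  · filter_upwards [hv.ae_differentiableWithinAt measurableSet_Ioo,
      ae_restrict_mem measurableSet_Ioo] with r hdiff hr
    exact hdiff.differentiableAt (Ioo_mem_nhds hr.1 hr.2)
  have hIcc : Icc x y ⊆ Ioo 0 D := Icc_subset_Ioo hx hyD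
  exact (hv.mono hIcc).integral_mul_deriv_add_deriv_mul_le hxy.le (fun t ht => hb t (hIcc ht))
    ((hb'cont.mono hIcc).intervalIntegrable_of_Icc hxy.le) fun t ht => (hbpos t (hIcc ht)).le

/-- if `v` is nondecreasing on `(0, D)` and `b` is a positive `C¹` function
on `(0, D)`, then `v` is differentiable almost everywhere on `(0, D)` and
`b(y)v(y) − b(x)v(x) ≥ ∫_x^y (b v' + b' v)` for `0 < x < y < D`. -/
theorem stmt1 (D : ℝ) (hD : 0 < D) (v : ℝ → ℝ) (hv : MonotoneOn v (Ioo 0 D))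
    (b b' : ℝ → ℝ) (hbpos : ∀ r ∈ Ioo 0 D, 0 < b r)
    (hb : ∀ r ∈ Ioo 0 D, HasDerivAt b (b' r) r)
    (hb'cont : ContinuousOn b' (Ioo 0 D)) :
    (∀ᵐ r ∂(volume.restrict (Ioo 0 D)), DifferentiableAt ℝ v r) ∧
    ∀ x y : ℝ, 0 < x → x < y → y < D →
      b y * v y - b x * v x ≥ ∫ r in x..y, (b r * deriv v r + b' r * v r) :=
  stmt1_general D v hv b b' hbpos hb hb'cont
end

section
/- Let 0 < x < y, let a > 0, and let f : [x, y] → ℝ and H : [x, y] → [0, ∞) be continuous, with f absolutely continuous and satisfying r·f'(r) ≥ a·f(r) − H(r) for almost every r ∈ (x, y). Then f(x) ≤ (x/y)^a f(y) + x^a ∫_x^y r^{−a−1} H(r) dr. -/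
/-!
The function `r ↦ r ^ (-a) * f r` is absolutely continuous on `[x, y]`, and its derivative
`r ^ (-a - 1) * (r * f' r - a * f r)` is a.e. at least `-r ^ (-a - 1) * H r`. Integrating from
`x` to `y` gives `x ^ (-a) * f x ≤ y ^ (-a) * f y + ∫ r ^ (-a - 1) * H r`; multiply by `x ^ a`.
-/

open MeasureTheory Set Filter

theorem AbsolutelyContinuousOnInterval.congr {X : Type*} [PseudoMetricSpace X] {f g : ℝ → X}
    {a b : ℝ} (hf : AbsolutelyContinuousOnInterval f a b) (hfg : EqOn f g (uIcc a b)) :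
    AbsolutelyContinuousOnInterval g a b := by
  rw [absolutelyContinuousOnInterval_iff] at hf ⊢
  intro ε hε
  obtain ⟨δ, hδ, hfδ⟩ := hf ε hε
  refine ⟨δ, hδ, fun E hE hlen => ?_⟩
  convert hfδ E hE hlen using 1
  refine Finset.sum_congr rfl fun i hi => ?_
  rw [hfg (hE.1 i hi).1, hfg (hE.1 i hi).2]

section EqAddIntegral

variable {f f' : ℝ → ℝ} {x y : ℝ} (hf' : IntervalIntegrable f' volume x y)
  (hf : ∀ t ∈ Icc x y, f t = f x + ∫ s in x..t, f' s)
include hf' hf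

theorem absolutelyContinuousOnInterval_of_eq_add_integral (hxy : x ≤ y) :
    AbsolutelyContinuousOnInterval f x y := by
  have hprim := hf'.absolutelyContinuousOnInterval_intervalIntegral left_mem_uIcc
  refine ((contDiffOn_const (c := f x)).absolutelyContinuousOnInterval.add hprim).congr ?_
  intro t ht
  rw [uIcc_of_le hxy] at ht
  exact (hf t ht).symm

theorem ae_hasDerivAt_of_eq_add_integral : ∀ᵐ r, r ∈ Ioo x y → HasDerivAt f (f' r) r := by
  filter_upwards [hf'.ae_hasDerivAt_integral] with r hprim hr
  have hr' : r ∈ uIcc x y := by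
    rw [uIcc_of_le (hr.1.trans hr.2).le]
    exact Ioo_subset_Icc_self hr
  have hfeq : (fun t => f x + ∫ s in x..t, f' s) =ᶠ[nhds r] f :=
    eventually_of_mem (Ioo_mem_nhds hr.1 hr.2) fun t ht => (hf t (Ioo_subset_Icc_self ht)).symm
  exact ((hprim hr' x left_mem_uIcc).const_add (f x)).congr_of_eventuallyEq hfeq.symm

end EqAddIntegral

theorem neg_rpow_mul_le_of_sub_le_mul {a r d v h : ℝ} (hr : 0 < r)
    (hle : a * v - h ≤ r * d) :
    -(r ^ (-a - 1) * h) ≤ d * r ^ (-a) + v * (-a * r ^ (-a - 1)) := by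
  have hpow : r ^ (-a) = r ^ (-a - 1) * r := by
    rw [← Real.rpow_add_one hr.ne']
    ring_nf
  rw [hpow]
  nlinarith [Real.rpow_pos_of_pos hr (-a - 1)]

theorem rpow_neg_mul_le_add_integral_of_ae_le_mul_deriv {f H : ℝ → ℝ} {x y a : ℝ} (hx : 0 < x)
    (hxy : x ≤ y) (hf : AbsolutelyContinuousOnInterval f x y) (hH : ContinuousOn H (Icc x y))
    (hode : ∀ᵐ r, r ∈ Ioo x y → a * f r - H r ≤ r * deriv f r) :
    x ^ (-a) * f x ≤ y ^ (-a) * f y + ∫ r in x..y, r ^ (-a - 1) * H r := by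
  have hpos : ∀ r ∈ uIcc x y, r ≠ 0 := fun r hr =>
    (hx.trans_le (by rw [uIcc_of_le hxy] at hr; exact hr.1)).ne'
  have hg : AbsolutelyContinuousOnInterval (fun r : ℝ => r ^ (-a)) x y :=
    ContDiffOn.absolutelyContinuousOnInterval fun r hr =>
      (Real.contDiffAt_rpow_const_of_ne (hpos r hr)).contDiffWithinAt
  have hlower : ∫ r in x..y, -(r ^ (-a - 1) * H r) ≤
      ∫ r in x..y, deriv f r * r ^ (-a) + f r * deriv (fun r : ℝ => r ^ (-a)) r := by
    refine intervalIntegral.integral_mono_ae_restrict hxy ?_ ?_ ?_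
    · refine (ContinuousOn.neg (ContinuousOn.mul ?_ ?_)).intervalIntegrable
      · exact fun r hr => (Real.continuousAt_rpow_const _ _ (Or.inl (hpos r hr))).continuousWithinAt
      · rwa [uIcc_of_le hxy]
    · exact (hf.intervalIntegrable_deriv.mul_continuousOn hg.continuousOn).add
        (hg.intervalIntegrable_deriv.continuousOn_mul hf.continuousOn)
    · rw [← Measure.restrict_congr_set Ioo_ae_eq_Icc]
      refine (ae_restrict_iff' measurableSet_Ioo).mpr ?_
      filter_upwards [hode] with r hode hr
      rw [Real.deriv_rpow_const]
      exact neg_rpow_mul_le_of_sub_le_mul (hx.trans hr.1) (hode hr)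
  rw [hf.integral_deriv_mul_eq_sub hg, intervalIntegral.integral_neg] at hlower
  linarith

theorem stmt2_general (x y a : ℝ) (hx : 0 < x) (hxy : x < y)
    (f f' H : ℝ → ℝ)
    (hHcont : ContinuousOn H (Icc x y))
    (hf'int : IntervalIntegrable f' volume x y)
    (hAC : ∀ t ∈ Icc x y, f t = f x + ∫ s in x..t, f' s)
    (hode : ∀ᵐ r ∂volume, r ∈ Ioo x y → r * f' r ≥ a * f r - H r) :
    f x ≤ (x / y) ^ a * f y + x ^ a * ∫ r in x..y, r ^ (-a - 1) * H r := by
  have hode' : ∀ᵐ r, r ∈ Ioo x y → a * f r - H r ≤ r * deriv f r := by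
    filter_upwards [hode, ae_hasDerivAt_of_eq_add_integral hf'int hAC] with r hode hderiv hr
    rw [(hderiv hr).deriv]
    exact hode hr
  have hkey := rpow_neg_mul_le_add_integral_of_ae_le_mul_deriv hx hxy.le
    (absolutelyContinuousOnInterval_of_eq_add_integral hf'int hAC hxy.le) hHcont hode'
  have hxa : x ^ a * x ^ (-a) = 1 := by rw [← Real.rpow_add hx, add_neg_cancel, Real.rpow_zero]
  have hxya : x ^ a * y ^ (-a) = (x / y) ^ a := by
    rw [Real.rpow_neg (hx.trans hxy).le, Real.div_rpow hx.le (hx.trans hxy).le, div_eq_mul_inv]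
  calc f x = x ^ a * (x ^ (-a) * f x) := by rw [← mul_assoc, hxa, one_mul]
    _ ≤ x ^ a * (y ^ (-a) * f y + ∫ r in x..y, r ^ (-a - 1) * H r) := by gcongr
    _ = (x / y) ^ a * f y + x ^ a * ∫ r in x..y, r ^ (-a - 1) * H r := by
        rw [mul_add, ← mul_assoc, hxya]

/-- Gronwall-type decay estimate. If `f` is absolutely continuous on `[x,y]`
(with derivative `f'` in the sense of the fundamental theorem of calculus), `H` is
continuous and nonnegative, and `r f'(r) ≥ a f(r) − H(r)` a.e. on `(x,y)`, then
`f(x) ≤ (x/y)^a f(y) + x^a ∫_x^y r^{−a−1} H(r) dr`. -/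
theorem stmt2 (x y a : ℝ) (hx : 0 < x) (hxy : x < y) (ha : 0 < a)
    (f f' H : ℝ → ℝ)
    (hHcont : ContinuousOn H (Icc x y)) (hHnn : ∀ r ∈ Icc x y, 0 ≤ H r)
    (hf'int : IntervalIntegrable f' volume x y)
    (hfc : ContinuousOn f (Icc x y))
    (hAC : ∀ t ∈ Icc x y, f t = f x + ∫ s in x..t, f' s)
    (hode : ∀ᵐ r ∂volume, r ∈ Ioo x y → r * f' r ≥ a * f r - H r) :
    f x ≤ (x / y) ^ a * f y + x ^ a * ∫ r in x..y, r ^ (-a - 1) * H r :=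
  stmt2_general x y a hx hxy f f' H hHcont hf'int hAC hode
end

section
/- Let a > 0, b > 0, A > 0 and 0 < x < y < A/3. Then x^a ∫_x^y r^{−a−1} (log(A/(2r)))^{−b} dr ≤ C ( (x/A)^{a/2} + (log(A/(2x)))^{−b} ), where C is a constant depending only on a and b. More precisely, splitting the interval of integration into I₁ = { r ∈ (x,y) : log(A/(2r)) ≥ (1/2) log(A/(2x)) } and I₂ = (x,y) \ I₁, one has ∫_{I₁} r^{−a−1}(log(A/(2r)))^{−b} dr ≤ 2^b a^{−1} x^{−a} (log(A/(2x)))^{−b} and ∫_{I₂} r^{−a−1}(log(A/(2r)))^{−b} dr ≤ C' a^{−1} (A x/2)^{−a/2}. -/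
/-!
On `I₁` the logarithm is at least half of `log (A / (2x))`, so the integrand is at most
`2 ^ b * log (A / (2x)) ^ (-b) * r ^ (-a - 1)`, and `∫_x^∞ r ^ (-a - 1) = x ^ (-a) / a`.
On `I₂` the logarithm is only bounded below by `log (3/2)`, but there `(A / (2r))² < A / (2x)`,
i.e. `I₂` lies beyond `√(Ax/2)`, and integrating `r ^ (-a - 1)` from that point gives the gain
`(Ax/2) ^ (-a/2)`, which after multiplication by `x ^ a` is `2 ^ (a/2) * (x/A) ^ (a/2)`.
-/

open MeasureTheory Set

lemma setIntegral_le_of_le_mul_rpow_of_subset_Ioi {a c K : ℝ} (ha : 0 < a) (hc : 0 < c)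
    (hK : 0 ≤ K) {s : Set ℝ} (hs : MeasurableSet s) (hsc : s ⊆ Ioi c) {f : ℝ → ℝ}
    (hf : ∀ r ∈ s, f r ≤ K * r ^ (-a - 1)) :
    ∫ r in s, f r ≤ K * a⁻¹ * c ^ (-a) := by
  have hexp : -a - 1 < -1 := by linarith
  have hg : IntegrableOn (fun r : ℝ => K * r ^ (-a - 1)) (Ioi c) :=
    (integrableOn_Ioi_rpow_of_lt hexp hc).const_mul K
  have hg_nonneg : 0 ≤ᵐ[volume.restrict (Ioi c)] fun r : ℝ => K * r ^ (-a - 1) := by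
    filter_upwards [ae_restrict_mem measurableSet_Ioi] with r hr
    have : 0 < r := hc.trans hr
    positivity
  by_cases hfi : IntegrableOn f s
  swap
  · rw [integral_undef hfi]
    positivity
  calc ∫ r in s, f r ≤ ∫ r in s, K * r ^ (-a - 1) :=
        setIntegral_mono_on hfi (hg.mono_set hsc) hs hf
    _ ≤ ∫ r in Ioi c, K * r ^ (-a - 1) := setIntegral_mono_set hg hg_nonneg hsc.eventuallyLE
    _ = K * a⁻¹ * c ^ (-a) := by
        rw [integral_const_mul, integral_Ioi_rpow_of_lt hexp hc, sub_add_cancel]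
        field_simp

lemma intervalIntegral_eq_setIntegral_le_add_setIntegral_lt {f g : ℝ → ℝ} {x y c : ℝ}
    (hxy : x ≤ y) (hg : Measurable g) (hf : IntegrableOn f (Ioo x y)) :
    ∫ r in x..y, f r =
      (∫ r in {r | r ∈ Ioo x y ∧ c ≤ g r}, f r) + ∫ r in {r | r ∈ Ioo x y ∧ g r < c}, f r := by
  rw [intervalIntegral.integral_of_le hxy, integral_Ioc_eq_integral_Ioo,
    ← integral_inter_add_sdiff (measurableSet_le measurable_const hg) hf]
  congr 3
  ext r
  simp [not_le]

lemma three_halves_lt_div_two_mul {A r : ℝ} (hr : 0 < r) (hrA : r < A / 3) :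
    3 / 2 < A / (2 * r) := by
  rw [lt_div_iff₀ (by positivity)]
  linarith

lemma log_three_halves_lt_log_div_two_mul {A r : ℝ} (hr : 0 < r) (hrA : r < A / 3) :
    Real.log (3 / 2) < Real.log (A / (2 * r)) :=
  Real.log_lt_log (by norm_num) (three_halves_lt_div_two_mul hr hrA)

lemma sqrt_lt_of_log_div_two_mul_lt_half_log {A x r : ℝ} (hA : 0 < A) (hx : 0 < x)
    (hr : 0 < r) (h : Real.log (A / (2 * r)) < 1 / 2 * Real.log (A / (2 * x))) :
    √(A * x / 2) < r := by
  have hsq : (A / (2 * r)) ^ 2 < A / (2 * x) := by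
    rw [← Real.log_lt_log_iff (by positivity) (by positivity), Real.log_pow]
    push_cast
    linarith
  rw [Real.sqrt_lt' hr]
  rw [div_pow, div_lt_div_iff₀ (by positivity) (by positivity)] at hsq
  nlinarith

lemma continuousOn_rpow_mul_log_rpow {a b A x y : ℝ} (hx : 0 < x) (hyA : y < A / 3) :
    ContinuousOn (fun r => r ^ (-a - 1) * Real.log (A / (2 * r)) ^ (-b)) (Icc x y) := by
  intro r ⟨hxr, hry⟩
  have hr : 0 < r := hx.trans_le hxr
  have hlog := log_three_halves_lt_log_div_two_mul hr (hry.trans_lt hyA)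
  have hlog_pos : 0 < Real.log (A / (2 * r)) := (Real.log_pos (by norm_num)).trans hlog
  have hdiv_pos : 0 < A / (2 * r) := by
    linarith [three_halves_lt_div_two_mul hr (hry.trans_lt hyA)]
  refine ContinuousAt.continuousWithinAt ?_
  exact (Real.continuousAt_rpow_const r _ (Or.inl hr.ne')).mul
    (((continuousAt_const.div (by fun_prop) (by positivity)).log hdiv_pos.ne').rpow_const
      (Or.inl hlog_pos.ne'))

lemma setIntegral_rpow_mul_log_rpow_le_of_half_log_le {a b A x y : ℝ} (ha : 0 < a) (hb : 0 ≤ b)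
    (hx : 0 < x) (hxA : x < A / 2) :
    ∫ r in {r : ℝ | r ∈ Ioo x y ∧ 1 / 2 * Real.log (A / (2 * x)) ≤ Real.log (A / (2 * r))},
        r ^ (-a - 1) * Real.log (A / (2 * r)) ^ (-b)
      ≤ 2 ^ b * a⁻¹ * x ^ (-a) * Real.log (A / (2 * x)) ^ (-b) := by
  set L := Real.log (A / (2 * x))
  have hL : 0 < L := Real.log_pos (by rw [lt_div_iff₀ (by positivity)]; linarith)
  have hmeas : Measurable fun r : ℝ => Real.log (A / (2 * r)) := by fun_prop
  have hL_half : (L / 2) ^ (-b) = 2 ^ b * L ^ (-b) := by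
    rw [Real.div_rpow hL.le zero_le_two, Real.rpow_neg zero_le_two]
    field_simp
  have hbound := setIntegral_le_of_le_mul_rpow_of_subset_Ioi (K := 2 ^ b * L ^ (-b))
    (s := {r : ℝ | r ∈ Ioo x y ∧ 1 / 2 * L ≤ Real.log (A / (2 * r))})
    (f := fun r => r ^ (-a - 1) * Real.log (A / (2 * r)) ^ (-b)) ha hx (by positivity)
    (measurableSet_Ioo.inter (measurableSet_le measurable_const hmeas)) (fun r hr => hr.1.1)
    (fun r ⟨⟨hxr, _⟩, hr⟩ => by
      have : Real.log (A / (2 * r)) ^ (-b) ≤ (L / 2) ^ (-b) :=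
        Real.rpow_le_rpow_of_nonpos (by linarith) (by linarith) (by linarith)
      have : 0 < r := hx.trans hxr
      rw [← hL_half, mul_comm _ (r ^ _)]
      gcongr)
  linarith

lemma setIntegral_rpow_mul_log_rpow_le_of_lt_half_log {a b A x y : ℝ} (ha : 0 < a) (hb : 0 ≤ b)
    (hA : 0 < A) (hx : 0 < x) (hyA : y < A / 3) :
    ∫ r in {r : ℝ | r ∈ Ioo x y ∧ Real.log (A / (2 * r)) < 1 / 2 * Real.log (A / (2 * x))},
        r ^ (-a - 1) * Real.log (A / (2 * r)) ^ (-b)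
      ≤ Real.log (3 / 2) ^ (-b) * a⁻¹ * (A * x / 2) ^ (-a / 2) := by
  have hmeas : Measurable fun r : ℝ => Real.log (A / (2 * r)) := by fun_prop
  have hsqrt : √(A * x / 2) ^ (-a) = (A * x / 2) ^ (-a / 2) := by
    rw [Real.sqrt_eq_rpow, ← Real.rpow_mul (by positivity)]
    ring_nf
  rw [← hsqrt]
  refine setIntegral_le_of_le_mul_rpow_of_subset_Ioi ha (by positivity) (by positivity)
    (measurableSet_Ioo.inter (measurableSet_lt hmeas measurable_const))
    (fun r ⟨⟨hxr, _⟩, hr⟩ => sqrt_lt_of_log_div_two_mul_lt_half_log hA hx (hx.trans hxr) hr)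
    (fun r ⟨⟨hxr, hry⟩, _⟩ => ?_)
  have hr : 0 < r := hx.trans hxr
  have : Real.log (A / (2 * r)) ^ (-b) ≤ Real.log (3 / 2) ^ (-b) :=
    Real.rpow_le_rpow_of_nonpos (Real.log_pos (by norm_num))
      (log_three_halves_lt_log_div_two_mul hr (hry.trans hyA)).le (by linarith)
  rw [mul_comm _ (r ^ _)]
  gcongr

lemma rpow_mul_rpow_neg_half {a A x : ℝ} (hA : 0 < A) (hx : 0 < x) :
    x ^ a * (A * x / 2) ^ (-a / 2) = 2 ^ (a / 2) * (x / A) ^ (a / 2) := by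
  calc x ^ a * (A * x / 2) ^ (-a / 2) = (x ^ 2) ^ (a / 2) * ((A * x / 2)⁻¹) ^ (a / 2) := by
        rw [Real.inv_rpow (by positivity), ← Real.rpow_neg (by positivity),
          ← Real.rpow_natCast_mul hx.le]
        ring_nf
    _ = (2 * (x / A)) ^ (a / 2) := by
        rw [← Real.mul_rpow (by positivity) (by positivity)]
        congr 1
        field_simp
    _ = 2 ^ (a / 2) * (x / A) ^ (a / 2) := Real.mul_rpow zero_le_two (by positivity)

/-- decay estimate with a logarithmic gauge. For `a, b > 0`, `A > 0`,
`0 < x < y < A/3`, one has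
`x^a ∫_x^y r^{−a−1} (log(A/(2r)))^{−b} dr ≤ C ((x/A)^{a/2} + (log(A/(2x)))^{−b})`
with `C = C(a,b)`; more precisely, splitting `(x,y)` into
`I₁ = {r : log(A/(2r)) ≥ (1/2) log(A/(2x))}` and `I₂ = (x,y) \ I₁`, one has
`∫_{I₁} ≤ 2^b a⁻¹ x^{−a} (log(A/(2x)))^{−b}` and `∫_{I₂} ≤ C' a⁻¹ (Ax/2)^{−a/2}`
with `C' = C'(b)`. -/
theorem stmt4 (b : ℝ) (hb : 0 < b) :
    ∃ C' : ℝ, 0 < C' ∧ ∀ a : ℝ, 0 < a → ∃ C : ℝ, 0 < C ∧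
      ∀ A x y : ℝ, 0 < A → 0 < x → x < y → y < A / 3 →
        (x ^ a * ∫ r in x..y, r ^ (-a - 1) * (Real.log (A / (2 * r))) ^ (-b)
            ≤ C * ((x / A) ^ (a / 2) + (Real.log (A / (2 * x))) ^ (-b))) ∧
        ((∫ r in {r : ℝ | r ∈ Ioo x y ∧
              (1 / 2) * Real.log (A / (2 * x)) ≤ Real.log (A / (2 * r))},
              r ^ (-a - 1) * (Real.log (A / (2 * r))) ^ (-b))
            ≤ 2 ^ b * a⁻¹ * x ^ (-a) * (Real.log (A / (2 * x))) ^ (-b)) ∧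
        ((∫ r in {r : ℝ | r ∈ Ioo x y ∧
              Real.log (A / (2 * r)) < (1 / 2) * Real.log (A / (2 * x))},
              r ^ (-a - 1) * (Real.log (A / (2 * r))) ^ (-b))
            ≤ C' * a⁻¹ * (A * x / 2) ^ (-a / 2)) := by
  set C' := Real.log (3 / 2) ^ (-b)
  refine ⟨C', by positivity, fun a ha => ⟨2 ^ b * a⁻¹ + C' * a⁻¹ * 2 ^ (a / 2), by positivity,
    fun A x y hA hx hxy hyA => ?_⟩⟩
  have hI₁ := setIntegral_rpow_mul_log_rpow_le_of_half_log_le (A := A) (y := y) ha hb.le hx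
    (by linarith)
  have hI₂ := setIntegral_rpow_mul_log_rpow_le_of_lt_half_log ha hb.le hA hx hyA
  refine ⟨?_, hI₁, hI₂⟩
  have hint : IntegrableOn (fun r => r ^ (-a - 1) * Real.log (A / (2 * r)) ^ (-b)) (Ioo x y) :=
    (continuousOn_rpow_mul_log_rpow hx hyA).integrableOn_Icc.mono_set Ioo_subset_Icc_self
  rw [intervalIntegral_eq_setIntegral_le_add_setIntegral_lt hxy.le
    (g := fun r => Real.log (A / (2 * r))) (by fun_prop) hint, mul_add]
  have hL : 0 < Real.log (A / (2 * x)) := (Real.log_pos (by norm_num)).trans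
    (log_three_halves_lt_log_div_two_mul hx (hxy.trans hyA))
  have hcancel : x ^ a * x ^ (-a) = 1 := by rw [← Real.rpow_add hx, add_neg_cancel, Real.rpow_zero]
  calc _ ≤ x ^ a * (2 ^ b * a⁻¹ * x ^ (-a) * Real.log (A / (2 * x)) ^ (-b))
        + x ^ a * (C' * a⁻¹ * (A * x / 2) ^ (-a / 2)) := by gcongr
    _ = 2 ^ b * a⁻¹ * Real.log (A / (2 * x)) ^ (-b)
          + C' * a⁻¹ * 2 ^ (a / 2) * (x / A) ^ (a / 2) := by
        linear_combination (2 ^ b * a⁻¹ * Real.log (A / (2 * x)) ^ (-b)) * hcancel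
          + C' * a⁻¹ * rpow_mul_rpow_neg_half hA hx
    _ ≤ _ := by
        have hP : 0 ≤ (x / A) ^ (a / 2) * (2 ^ b * a⁻¹) := by positivity
        have hQ : 0 ≤ Real.log (A / (2 * x)) ^ (-b) * (C' * a⁻¹ * 2 ^ (a / 2)) := by positivity
        linarith
end

section
/- Let l > 0 and let v : [0, l] → ℝ^m be Lipschitz with v(0) = v(l) = 0. Then ∫_0^l |v'(t)|² dt ≥ (π/l)² ∫_0^l |v(t)|² dt. -/
/-! If `w` solves the Riccati equation `w' = -c² - w²` on `[a, b]`, then almost everywhere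
`‖v'‖² - c² ‖v‖² = ‖v' - w • v‖² + (‖v‖² w)'`. Integrating (the Lipschitz function `‖v‖² w` is
absolutely continuous), the boundary term vanishes since `v a = v b = 0`, so
`c² ∫ ‖v‖² ≤ ∫ ‖v'‖²`. For `c (b - a) < π` the function `w t = c tan (c ((a + b) / 2 - t))` is
such a solution, smooth on all of `[a, b]`; letting `c ↑ π / l` gives the sharp constant, at which
`w` would blow up at the endpoints. -/

open MeasureTheory Set Real Filter Topology
open scoped NNReal

theorem LipschitzOnWith.intervalIntegrable_norm_deriv_sq {E : Type*} [NormedAddCommGroup E]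
    [NormedSpace ℝ E] [CompleteSpace E] {v : ℝ → E} {a b : ℝ} {K : ℝ≥0}
    (hab : a ≤ b) (hv : LipschitzOnWith K v (Icc a b)) :
    IntervalIntegrable (fun t => ‖deriv v t‖ ^ 2) volume a b := by
  rw [intervalIntegrable_iff_integrableOn_Ioo_of_le hab]
  refine Measure.integrableOn_of_bounded (M := (K : ℝ) ^ 2) measure_Ioo_lt_top.ne
    ((aestronglyMeasurable_deriv v _).norm.pow 2) ?_
  filter_upwards [ae_restrict_mem measurableSet_Ioo] with t ht
  have hK : ‖deriv v t‖ ≤ K := norm_deriv_le_of_lipschitzOn (Icc_mem_nhds ht.1 ht.2) hv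
  rw [norm_pow, norm_norm]
  gcongr

theorem LipschitzOnWith.ae_differentiableAt_Ioo {E : Type*} [NormedAddCommGroup E]
    [NormedSpace ℝ E] [FiniteDimensional ℝ E] {v : ℝ → E} {a b : ℝ} {K : ℝ≥0}
    (hv : LipschitzOnWith K v (Icc a b)) :
    ∀ᵐ t ∂volume.restrict (Ioo a b), DifferentiableAt ℝ v t := by
  filter_upwards [(hv.mono Ioo_subset_Icc_self).ae_differentiableWithinAt_real measurableSet_Ioo,
    ae_restrict_mem measurableSet_Ioo] with t hvt ht
  exact hvt.differentiableAt (isOpen_Ioo.mem_nhds ht)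

section InnerProductSpace

variable {E : Type*} [NormedAddCommGroup E] [InnerProductSpace ℝ E] [FiniteDimensional ℝ E]

theorem sq_mul_integral_norm_sq_le_integral_norm_deriv_sq_of_riccati
    {v : ℝ → E} {w : ℝ → ℝ} {a b c : ℝ} {K : ℝ≥0} (hab : a ≤ b)
    (hv : LipschitzOnWith K v (Icc a b)) (hva : v a = 0) (hvb : v b = 0)
    (hw : ContDiffOn ℝ 1 w (Icc a b))
    (hw' : ∀ t ∈ Ioo a b, HasDerivAt w (-c ^ 2 - w t ^ 2) t) :
    c ^ 2 * ∫ t in a..b, ‖v t‖ ^ 2 ≤ ∫ t in a..b, ‖deriv v t‖ ^ 2 := by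
  rw [← uIcc_of_le hab] at hv hw
  have hnorm : AbsolutelyContinuousOnInterval (fun t => ‖v t‖) a b :=
    (lipschitzWith_one_norm.comp_lipschitzOnWith hv).absolutelyContinuousOnInterval
  set G : ℝ → ℝ := fun t => ‖v t‖ ^ 2 * w t
  have hG : AbsolutelyContinuousOnInterval G a b := by
    convert (hnorm.mul hnorm).mul hw.absolutelyContinuousOnInterval using 1
    ext t
    simp [G, sq]
  have hG_int : ∫ t in a..b, deriv G t = 0 := by
    simp [hG.integral_deriv_eq_sub, G, hva, hvb]
  have hv_int : IntervalIntegrable (fun t => ‖v t‖ ^ 2) volume a b :=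
    (hv.continuousOn.norm.pow 2).intervalIntegrable
  rw [uIcc_of_le hab] at hv
  have hpicone : ∀ᵐ t ∂volume.restrict (Icc a b),
      c ^ 2 * ‖v t‖ ^ 2 + deriv G t ≤ ‖deriv v t‖ ^ 2 := by
    rw [← Measure.restrict_congr_set Ioo_ae_eq_Icc]
    filter_upwards [hv.ae_differentiableAt_Ioo, ae_restrict_mem measurableSet_Ioo]
      with t hvt ht
    have hGt : deriv G t =
        2 * inner ℝ (v t) (deriv v t) * w t + ‖v t‖ ^ 2 * (-c ^ 2 - w t ^ 2) :=
      (hvt.hasDerivAt.norm_sq.mul (hw' t ht)).deriv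
    have hsq := sq_nonneg ‖deriv v t - w t • v t‖
    rw [norm_sub_sq_real, inner_smul_right, norm_smul, mul_pow, norm_eq_abs, sq_abs,
      real_inner_comm] at hsq
    rw [hGt]
    linarith
  calc c ^ 2 * ∫ t in a..b, ‖v t‖ ^ 2
      = ∫ t in a..b, c ^ 2 * ‖v t‖ ^ 2 + deriv G t := by
        rw [intervalIntegral.integral_add (hv_int.const_mul _) hG.intervalIntegrable_deriv,
          intervalIntegral.integral_const_mul, hG_int, add_zero]
    _ ≤ ∫ t in a..b, ‖deriv v t‖ ^ 2 :=
        intervalIntegral.integral_mono_ae_restrict hab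
          ((hv_int.const_mul _).add hG.intervalIntegrable_deriv)
          (hv.intervalIntegrable_norm_deriv_sq hab) hpicone

theorem hasDerivAt_mul_tan_mul_sub {c s t : ℝ} (h : cos (c * (s - t)) ≠ 0) :
    HasDerivAt (fun t => c * tan (c * (s - t))) (-c ^ 2 - (c * tan (c * (s - t))) ^ 2) t := by
  have hlin : HasDerivAt (fun t => c * (s - t)) (c * -1) t :=
    ((hasDerivAt_id t).const_sub s).const_mul c
  refine (((Real.hasDerivAt_tan h).comp t hlin).const_mul c).congr_deriv ?_
  rw [one_div, ← inv_one_add_tan_sq h, inv_inv]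
  ring

theorem sq_mul_integral_norm_sq_le_integral_norm_deriv_sq_of_mul_lt_pi
    {v : ℝ → E} {a b c : ℝ} {K : ℝ≥0} (hab : a ≤ b)
    (hv : LipschitzOnWith K v (Icc a b)) (hva : v a = 0) (hvb : v b = 0)
    (hc : 0 ≤ c) (hcπ : c * (b - a) < π) :
    c ^ 2 * ∫ t in a..b, ‖v t‖ ^ 2 ≤ ∫ t in a..b, ‖deriv v t‖ ^ 2 := by
  have hcos : ∀ t ∈ Icc a b, cos (c * ((a + b) / 2 - t)) ≠ 0 := by
    intro t ht
    have := mul_nonneg hc (sub_nonneg.2 ht.1)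
    have := mul_nonneg hc (sub_nonneg.2 ht.2)
    refine (cos_pos_of_mem_Ioo ⟨?_, ?_⟩).ne' <;> linarith
  refine sq_mul_integral_norm_sq_le_integral_norm_deriv_sq_of_riccati
    (w := fun t => c * tan (c * ((a + b) / 2 - t))) hab hv hva hvb
    (fun t ht => ContDiffAt.contDiffWithinAt ?_)
    (fun t ht => hasDerivAt_mul_tan_mul_sub (hcos t (Ioo_subset_Icc_self ht)))
  exact contDiffAt_const.mul ((Real.contDiffAt_tan.2 (hcos t ht)).comp (g := tan) t
    (contDiffAt_const.mul (contDiffAt_const.sub contDiffAt_id)))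

end InnerProductSpace

/-- Wirtinger/Poincaré inequality: if `v : [0, l] → ℝ^m` is Lipschitz with
`v(0) = v(l) = 0`, then `∫_0^l |v'(t)|² dt ≥ (π/l)² ∫_0^l |v(t)|² dt`. -/
theorem stmt8 (l : ℝ) (hl : 0 < l) (m : ℕ) (v : ℝ → EuclideanSpace ℝ (Fin m))
    (K : NNReal) (hlip : LipschitzOnWith K v (Icc 0 l))
    (h0 : v 0 = 0) (h1 : v l = 0) :
    (∫ t in (0:ℝ)..l, ‖deriv v t‖ ^ 2)
      ≥ (Real.pi / l) ^ 2 * ∫ t in (0:ℝ)..l, ‖v t‖ ^ 2 := by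
  have hlim : Tendsto (fun c : ℝ => c ^ 2 * ∫ t in (0:ℝ)..l, ‖v t‖ ^ 2) (𝓝[<] (π / l))
      (𝓝 ((π / l) ^ 2 * ∫ t in (0:ℝ)..l, ‖v t‖ ^ 2)) :=
    ((continuous_pow 2).mul continuous_const).continuousWithinAt
  refine le_of_tendsto hlim ?_
  filter_upwards [Ioo_mem_nhdsLT (div_pos pi_pos hl)] with c hc
  refine sq_mul_integral_norm_sq_le_integral_norm_deriv_sq_of_mul_lt_pi hl.le hlip h0 h1
    hc.1.le ?_
  rw [sub_zero, ← lt_div_iff₀ hl]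
  exact hc.2
end
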